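/- In the M/G/1 queue with Poisson arrival rate λ, phase-type service time distribution F_p with mean μ_p satisfying λμ_p < 1, and perturbed service distribution G_ε = (1−ε)F_p + εF_h with heavy-tailed F_h of mean μ_h, the Pollaczek–Khinchine transform w_ε(s) = (1 − λ m_ε)s / (s − λ(1 − Ĝ_ε(s))) (with m_ε = (1−ε)μ_p + εμ_h) admits the first-order expansion w_ε(s) = w_0(s) + ε·(λ/(1−λμ_p))·w_0(s)·[ (μ_p − μ_h) + w_0(s)·(μ_h·Ĥ_e(s) − μ_p·P̂_e(s)) ] + O(ε²), where P̂_e and Ĥ_e are the LSTs of the stationary excess distributions of F_p and F_h respectively. -/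
import Mathlib


open Filter Asymptotics Set

/-- First-order expansion of the Pollaczek–Khinchine transform of the M/G/1
queue with perturbed service distribution `G_ε = (1−ε)F_p + εF_h`:
`w_ε(s) = w_0(s) + ε·(λ/(1−λμ_p))·w_0(s)·[(μ_p − μ_h)
  + w_0(s)·(μ_h·Ĥ_e(s) − μ_p·P̂_e(s))] + O(ε²)` as `ε → 0`, for fixed `s > 0`. -/
theorem pk_transform_expansion
    (lam μp μh : ℝ) (hlam : 0 < lam) (hμp : 0 < μp) (hμh : 0 < μh)
    (hstab : lam * μp < 1)
    (Fp Fh : ℝ → ℝ)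
    (s : ℝ) (hs : 0 < s) (hden : s - lam * (1 - Fp s) ≠ 0)
    (w0 Pe He : ℝ → ℝ) (me : ℝ → ℝ) (Ge we : ℝ → ℝ → ℝ)
    (hw0 : ∀ u, w0 u = (1 - lam * μp) * u / (u - lam * (1 - Fp u)))
    (hPe : ∀ u, Pe u = (1 - Fp u) / (μp * u))
    (hHe : ∀ u, He u = (1 - Fh u) / (μh * u))
    (hme : ∀ ε, me ε = (1 - ε) * μp + ε * μh)
    (hGe : ∀ ε u, Ge ε u = (1 - ε) * Fp u + ε * Fh u)
    (hwe : ∀ ε u, we ε u = (1 - lam * me ε) * u / (u - lam * (1 - Ge ε u))) :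
    (fun ε => we ε s - w0 s
        - ε * (lam / (1 - lam * μp)) * w0 s
            * ((μp - μh) + w0 s * (μh * He s - μp * Pe s)))
      =O[nhdsWithin 0 (Ioi 0)] fun ε => ε ^ 2 := by
  have hs' : s ≠ 0 := ne_of_gt hs
  have hμp1 : (1 : ℝ) - lam * μp ≠ 0 := by nlinarith
  set K : ℝ := -(lam * (Fh s - Fp s)) *
      ((s * lam * (μp - μh)) * (s - lam * (1 - Fp s))
        - ((1 - lam * μp) * s) * (lam * (Fh s - Fp s)))
      / (s - lam * (1 - Fp s)) ^ 2 with hK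
  set D : ℝ → ℝ := fun ε => s - lam * (1 - ((1 - ε) * Fp s + ε * Fh s)) with hD
  have hDtend : Filter.Tendsto D (nhdsWithin (0:ℝ) (Ioi 0)) (nhds (s - lam * (1 - Fp s))) := by
    have hc : Continuous D := by fun_prop
    have := hc.tendsto 0
    simp only [hD] at this ⊢
    have h0 : s - lam * (1 - ((1 - (0:ℝ)) * Fp s + 0 * Fh s)) = s - lam * (1 - Fp s) := by ring
    rw [h0] at this
    exact this.mono_left nhdsWithin_le_nhds
  have hDev : ∀ᶠ ε in nhdsWithin (0:ℝ) (Ioi 0), D ε ≠ 0 := hDtend.eventually_ne hden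
  have heq : (fun ε => we ε s - w0 s
        - ε * (lam / (1 - lam * μp)) * w0 s
            * ((μp - μh) + w0 s * (μh * He s - μp * Pe s)))
      =ᶠ[nhdsWithin (0:ℝ) (Ioi 0)] fun ε => ε ^ 2 * (K / D ε) := by
    filter_upwards [hDev] with ε hε
    rw [hwe, hw0, hPe, hHe, hme, hGe, hK]
    simp only [hD] at hε ⊢
    field_simp
    ring
  have hbound : (fun ε => K / D ε) =O[nhdsWithin (0:ℝ) (Ioi 0)] (fun _ => (1:ℝ)) := by
    have : Filter.Tendsto (fun ε => K / D ε) (nhdsWithin (0:ℝ) (Ioi 0))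
        (nhds (K / (s - lam * (1 - Fp s)))) := Filter.Tendsto.div tendsto_const_nhds hDtend hden
    exact this.isBigO_one ℝ
  calc (fun ε => we ε s - w0 s
        - ε * (lam / (1 - lam * μp)) * w0 s
            * ((μp - μh) + w0 s * (μh * He s - μp * Pe s)))
      =ᶠ[nhdsWithin (0:ℝ) (Ioi 0)] fun ε => ε ^ 2 * (K / D ε) := heq
    _ =O[nhdsWithin (0:ℝ) (Ioi 0)] fun ε => ε ^ 2 * 1 :=
        (Asymptotics.isBigO_refl (fun ε : ℝ => ε ^ 2) _).mul hbound
    _ = fun ε => ε ^ 2 := by funext ε; ring
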